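/- Let N ≥ 3, let c₁, …, c_{N−1} ≥ 0, X ≥ 0 and κ ≥ 0 satisfy: X² = (c₁² + κ/2) + (Y² + κ/2) for some Y ≥ 0 with Y² ≥ c₂² + ⋯ + c_{N−1}², and c₁² + κ/2 ≥ 0. Then for any ν ≥ 2, X^ν ≥ (4(c₁² + κ/2)·((N−2)·(∏_{i=2}^{N−1} c_i²)^{1/(N−2)} + κ/2))^{ν/4}. -/

import Mathlib

/-!
Write `a = c₁² + κ/2` and `b = Y² + κ/2`, so that `X² = a + b`. By AM-GM on `c₂², …, c_{N-1}²`
the factor `(N-2)·(∏ cᵢ²)^{1/(N-2)} + κ/2` is at most `b`, and the two-party bound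
`4ab ≤ (a + b)² = X⁴` finishes the proof after raising both sides to the power `ν/4`.
-/

open Finset

theorem Real.card_mul_prod_rpow_one_div_card_le_sum {ι : Type*} (s : Finset ι) (z : ι → ℝ)
    (hz : ∀ i ∈ s, 0 ≤ z i) :
    (#s : ℝ) * (∏ i ∈ s, z i) ^ ((1 : ℝ) / #s) ≤ ∑ i ∈ s, z i := by
  rcases s.eq_empty_or_nonempty with rfl | hs
  · simp
  have hcard : (0 : ℝ) < #s := by exact_mod_cast hs.card_pos
  have amgm := Real.geom_mean_le_arith_mean s (fun _ ↦ 1) z (fun _ _ ↦ zero_le_one)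
    (by simpa using hcard) hz
  simp only [Real.rpow_one, sum_const, nsmul_eq_mul, mul_one, one_mul] at amgm
  rwa [one_div, ← le_div_iff₀' hcard]

theorem four_mul_le_sq_add_of_le {R : Type*} [CommSemiring R] [LinearOrder R]
    [IsStrictOrderedRing R] [ExistsAddOfLE R] {a b b' : R} (ha : 0 ≤ a) (hb : b' ≤ b) :
    4 * a * b' ≤ (a + b) ^ 2 :=
  (mul_le_mul_of_nonneg_left hb (by positivity)).trans (four_mul_le_sq_add a b)

theorem Real.rpow_div_le_rpow_of_le_pow {L X ν : ℝ} {n : ℕ} (hn : n ≠ 0) (hL : 0 ≤ L)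
    (hX : 0 ≤ X) (hν : 0 ≤ ν) (h : L ≤ X ^ n) : L ^ (ν / n) ≤ X ^ ν := by
  calc L ^ (ν / n) ≤ (X ^ n) ^ (ν / n) := by gcongr
    _ = X ^ ν := by
      rw [← Real.rpow_natCast, ← Real.rpow_mul hX, mul_div_cancel₀ _ (by exact_mod_cast hn)]

theorem stmt4_general (N : ℕ) (hN : 3 ≤ N) (c1 : ℝ)
    (c : Fin (N - 2) → ℝ)
    (X Y κ : ℝ) (hX : 0 ≤ X) (hκ : 0 ≤ κ)
    (hsum : X ^ 2 = (c1 ^ 2 + κ / 2) + (Y ^ 2 + κ / 2))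
    (hYmono : ∑ i, (c i) ^ 2 ≤ Y ^ 2)
    (hpos : 0 ≤ c1 ^ 2 + κ / 2)
    (ν : ℝ) (hν : 2 ≤ ν) :
    (4 * (c1 ^ 2 + κ / 2) *
      ((N - 2) * (∏ i, (c i) ^ 2) ^ ((1 : ℝ) / (N - 2)) + κ / 2)) ^ (ν / 4)
      ≤ X ^ ν := by
  have hcard : (N : ℝ) - 2 = #(univ : Finset (Fin (N - 2))) := by
    rw [card_univ, Fintype.card_fin, Nat.cast_sub (by omega)]
    norm_num
  have amgm := Real.card_mul_prod_rpow_one_div_card_le_sum univ (fun i ↦ c i ^ 2)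
    (fun i _ ↦ sq_nonneg _)
  rw [← hcard] at amgm
  have hgeom : 0 ≤ (N - 2 : ℝ) * (∏ i, (c i) ^ 2) ^ ((1 : ℝ) / (N - 2)) := by
    rw [hcard]
    positivity
  refine Real.rpow_div_le_rpow_of_le_pow (n := 4) (by norm_num) (by positivity) hX
    (by linarith) ?_
  calc _ ≤ ((c1 ^ 2 + κ / 2) + (Y ^ 2 + κ / 2)) ^ 2 := four_mul_le_sq_add_of_le hpos (by linarith)
    _ = X ^ 4 := by rw [← hsum]; ring

theorem stmt4 (N : ℕ) (hN : 3 ≤ N) (c1 : ℝ) (hc1 : 0 ≤ c1)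
    (c : Fin (N - 2) → ℝ) (hc : ∀ i, 0 ≤ c i)
    (X Y κ : ℝ) (hX : 0 ≤ X) (hY : 0 ≤ Y) (hκ : 0 ≤ κ)
    (hsum : X ^ 2 = (c1 ^ 2 + κ / 2) + (Y ^ 2 + κ / 2))
    (hYmono : ∑ i, (c i) ^ 2 ≤ Y ^ 2)
    (hpos : 0 ≤ c1 ^ 2 + κ / 2)
    (ν : ℝ) (hν : 2 ≤ ν) :
    (4 * (c1 ^ 2 + κ / 2) *
      ((N - 2) * (∏ i, (c i) ^ 2) ^ ((1 : ℝ) / (N - 2)) + κ / 2)) ^ (ν / 4)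
      ≤ X ^ ν :=
  stmt4_general N hN c1 c X Y κ hX hκ hsum hYmono hpos ν hν
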